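/- arXiv:1009.0803 — 3 statements merged into one kernel-verified Lean document; each statement's English description precedes it below -/
import Mathlib

section
/- In the dual B* of an Ann-functor between Ann-categories of type (R',M') and (R,M), the sum of objects is given by (r,u_r)+(s,u_s) = (r+s, u_{r+s}) where u(r+s,x) = u(r,x) + u(s,x) − λ(px,r,s); this formula defines a valid right (B,F)-module structure on r+s, i.e., u_{r+s} satisfies u(r+s,1)=0 and the two cocycle-type conditions satisfied by objects of B*. -/
/-!
Both defects of `x ↦ λ(px, r, s)` are controlled by the axioms of `I(R,M)` once `r, s` commute
with `p(R')`: its failure to be additive is `η(s·px, r·py)`, which by antisymmetry of `η` is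
exactly the failure of `λ(−, px, py)` to be additive at `r + s`; and it is a derivation for the
bimodule structure (`λ(px·py, r, s) = px·λ(py, r, s) + λ(px, r, s)·py`). Hence the correction
term `−λ(px, r, s)` turns the sum of the two cocycle identities for `u_r` and `u_s` into those
for `u_{r+s}`.
-/

open MulOpposite

section
variable {R' M' R M : Type*} [Ring R'] [Ring R] [AddCommGroup M'] [AddCommGroup M]
  [Module R' M'] [Module R'ᵐᵒᵖ M'] [SMulCommClass R' R'ᵐᵒᵖ M']
  [Module R M] [Module Rᵐᵒᵖ M] [SMulCommClass R Rᵐᵒᵖ M]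

/-- The characterization of the objects of the dual `B*` of an Ann-functor
`F = (p,q)` between Ann-categories `B = I(R',M')` and `A = I(R,M)`: pairs
`(r, u)` with `r` in the centralizer of `p(R')` and `u : R' → M` a function with
`u 1 = 0`, satisfying the two compatibility equations with `λ` (left
distributivity of `A`) and `μ, ν` (the functions determining `F̆, F̃`).  The
right action `m·r` is written `op r • m`. -/
def IsDualObj (p : R' →+* R) (lam : R → R → R → M) (mu nu : R' → R' → M)
    (r : R) (u : R' → M) : Prop :=
  (∀ x : R', r * p x = p x * r) ∧ u 1 = 0
  ∧ (∀ x y : R',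
      u x - u (x + y) + u y = op r • mu x y + r • mu x y - lam r (p x) (p y))
  ∧ (∀ x y : R',
      p x • u y - u (x * y) + op (p y) • u x = r • nu x y - op r • nu x y)

end

section
variable {R M : Type*} [Ring R] [AddCommGroup M]

theorem lam_add_of_commute (lam : R → R → R → M) (eta : R → R → M)
    (hlamadd : ∀ a b x y : R,
      lam (a + b) x y = lam a x y + lam b x y - eta (b * x) (a * y))
    (heta : ∀ x y : R, eta x y = - eta y x)
    {a b r s : R} (has : Commute a s) (hbr : Commute b r) :
    lam (a + b) r s = lam a r s + lam b r s + eta (s * a) (r * b) := by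
  rw [hlamadd, heta, hbr.eq, has.eq, sub_neg_eq_add]

theorem lam_mul_of_commute [Module R M] [Module Rᵐᵒᵖ M] (lam : R → R → R → M)
    (hlam2 : ∀ x y z t : R, x • lam y z t + lam x (y * z) (y * t) = lam (x * y) z t)
    (hlam3 : ∀ a x y b : R, op b • lam a x y = lam a (x * b) (y * b))
    {a b r s : R} (hr : Commute r b) (hs : Commute s b) :
    lam (a * b) r s = a • lam b r s + op b • lam a r s := by
  rw [hlam3, hr.eq, hs.eq, hlam2]

end

section
variable {R' M' R M : Type*} [Ring R'] [Ring R] [AddCommGroup M'] [AddCommGroup M]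
  [Module R' M'] [Module R'ᵐᵒᵖ M'] [SMulCommClass R' R'ᵐᵒᵖ M']
  [Module R M] [Module Rᵐᵒᵖ M] [SMulCommClass R Rᵐᵒᵖ M]

/-- In the dual `B*` of an Ann-functor between Ann-categories
of types `(R',M')` and `(R,M)`, the sum of objects is
`(r,u_r)+(s,u_s) = (r+s, u_{r+s})` with
`u(r+s,x) = u(r,x) + u(s,x) − λ(px,r,s)`; this formula defines a valid right
`(B,F)`-module structure on `r+s`, i.e. `u_{r+s}(1) = 0` and the two
cocycle-type conditions hold.  (The hypotheses `hlam₁`–`heta` are among the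
coherence conditions satisfied by the constraint functions `λ, η` of `I(R,M)`.) -/
theorem dual_sum_of_objects (p : R' →+* R) (lam : R → R → R → M)
    (eta : R → R → M) (mu nu : R' → R' → M)
    (hlam1 : ∀ a b : R, lam 1 a b = 0)
    (hlam2 : ∀ x y z t : R, x • lam y z t + lam x (y * z) (y * t) = lam (x * y) z t)
    (hlam3 : ∀ a x y b : R, op b • lam a x y = lam a (x * b) (y * b))
    (hlamadd : ∀ a b x y : R,
      lam (a + b) x y = lam a x y + lam b x y - eta (b * x) (a * y))
    (heta : ∀ x y : R, eta x y = - eta y x)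
    (r s : R) (u v : R' → M)
    (hr : IsDualObj p lam mu nu r u) (hs : IsDualObj p lam mu nu s v) :
    IsDualObj p lam mu nu (r + s) (fun x => u x + v x - lam (p x) r s) := by
  obtain ⟨hr_comm, hr_one, hr_add, hr_mul⟩ := hr
  obtain ⟨hs_comm, hs_one, hs_add, hs_mul⟩ := hs
  refine ⟨fun x => Commute.add_left (hr_comm x) (hs_comm x), by simp [hr_one, hs_one, hlam1],
    fun x y => ?_, fun x y => ?_⟩
  · have hlam_px_add := lam_add_of_commute lam eta hlamadd heta
      (hs_comm x).symm (hr_comm y).symm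
    simp only [map_add, hlamadd r s, op_add, add_smul]
    linear_combination (norm := abel) hr_add x y + hs_add x y + hlam_px_add
  · have hlam_px_mul := lam_mul_of_commute lam hlam2 hlam3 (a := p x) (hr_comm y) (hs_comm y)
    simp only [map_mul, smul_sub, smul_add, op_add, add_smul]
    linear_combination (norm := abel) hr_mul x y + hs_mul x y + hlam_px_mul

end
end

section
/- In the dual B* of type-(R,M) Ann-categories, the additive inverse of the object (r, u_r) is (−r, u_{−r}) where u(−r,x) = λ(px, r, −r) − u(r,x); that is, (r,u_r)+(−r,u_{−r}) equals the unit object (0, u_0) with u(0,x) = λ(px,0,0) determined by L̂^{-1}. -/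
/-!
The equations defining an object `(r, u)` of `B*` are affine in `u`, and their right-hand sides
change sign with `r` except for the `λ(r, px, py)` term.  So `(-r, δ - u)` is an object as soon as
`δ x = λ(px, r, -r)` solves the homogeneous multiplicative equation and the additive one with
defect `-(λ(r, px, py) + λ(-r, px, py))`.  The former comes from the two associativity laws of `λ`,
the latter from additivity of `λ` in its first variable together with antisymmetry of `η`; both
use that `r` commutes with `p(R')`.
-/

open MulOpposite

section
variable {R M : Type*} [Ring R] [AddCommGroup M] {lam : R → R → R → M}

theorem lam_zero_left [Module R M] (hlam0 : lam 0 0 0 = 0)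
    (hlam2 : ∀ x y z t : R, x • lam y z t + lam x (y * z) (y * t) = lam (x * y) z t)
    (z t : R) : lam 0 z t = 0 := by
  simpa [hlam0] using (hlam2 0 0 z t).symm

theorem lam_neg_coboundary_add {eta : R → R → M}
    (hlamadd : ∀ a b x y : R, lam (a + b) x y = lam a x y + lam b x y - eta (b * x) (a * y))
    (heta : ∀ x y : R, eta x y = -eta y x) (hlam_zero : ∀ z t : R, lam 0 z t = 0)
    {r a b : R} (ha : Commute r a) (hb : Commute r b) :
    lam a r (-r) - lam (a + b) r (-r) + lam b r (-r) = -(lam r a b + lam (-r) a b) := by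
  have hsum : lam r a b + lam (-r) a b = eta (-r * a) (r * b) := by
    have h := hlamadd r (-r) a b
    rw [add_neg_cancel, hlam_zero] at h
    exact sub_eq_zero.mp h.symm
  have heta' : eta (-r * a) (r * b) = -eta (b * r) (a * -r) := by
    rw [heta, neg_mul, ha.eq, ← mul_neg, hb.eq]
  rw [hsum, heta', neg_neg, hlamadd]
  abel

theorem lam_neg_coboundary_mul [Module R M] [Module Rᵐᵒᵖ M]
    (hlam2 : ∀ x y z t : R, x • lam y z t + lam x (y * z) (y * t) = lam (x * y) z t)
    (hlam3 : ∀ a x y b : R, op b • lam a x y = lam a (x * b) (y * b))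
    {r : R} (a : R) {b : R} (hb : Commute r b) :
    a • lam b r (-r) - lam (a * b) r (-r) + op b • lam a r (-r) = 0 := by
  rw [hlam3, neg_mul, hb.eq, ← mul_neg, ← hlam2]
  abel

end

section
variable {R' R M : Type*} [Ring R'] [Ring R] [AddCommGroup M] [Module R M] [Module Rᵐᵒᵖ M]
  {p : R' →+* R} {lam : R → R → R → M} {mu nu : R' → R' → M} {r : R} {u : R' → M}

theorem IsDualObj.neg_of_correction (hr : IsDualObj p lam mu nu r u) {w : R' → M}
    (hw1 : w 1 = 0)
    (hwadd : ∀ x y : R',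
      w x - w (x + y) + w y = -(lam r (p x) (p y) + lam (-r) (p x) (p y)))
    (hwmul : ∀ x y : R', p x • w y - w (x * y) + op (p y) • w x = 0) :
    IsDualObj p lam mu nu (-r) (fun x => w x - u x) := by
  obtain ⟨hcomm, hu1, huadd, humul⟩ := hr
  refine ⟨fun x => by rw [neg_mul, mul_neg, hcomm], by simp only [hw1, hu1, sub_zero], ?_, ?_⟩
  · intro x y
    simp only [op_neg, neg_smul]
    linear_combination (norm := abel) hwadd x y - huadd x y
  · intro x y
    simp only [op_neg, neg_smul, smul_sub]
    linear_combination (norm := abel) hwmul x y - humul x y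

end

section
variable {R' M' R M : Type*} [Ring R'] [Ring R] [AddCommGroup M'] [AddCommGroup M]
  [Module R' M'] [Module R'ᵐᵒᵖ M'] [SMulCommClass R' R'ᵐᵒᵖ M']
  [Module R M] [Module Rᵐᵒᵖ M] [SMulCommClass R Rᵐᵒᵖ M]

/-- In the dual `B*` of type-`(R,M)` Ann-categories, the
additive inverse of the object `(r, u_r)` is `(−r, u_{−r})` with
`u(−r,x) = λ(px,r,−r) − u(r,x)`: it is an object of `B*` and
`(r,u_r)+(−r,u_{−r})` — whose `u`-component is
`u_r(x) + u_{−r}(x) − λ(px,r,−r)` — equals the unit object `(0, u_0)` with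
`u_0(x) = λ(px,0,0)` determined by `L̂⁻¹`.  (The hypotheses `hlam…`, `heta` are
among the coherence conditions satisfied by `λ, η`.) -/
theorem dual_additive_inverse (p : R' →+* R) (lam : R → R → R → M)
    (eta : R → R → M) (mu nu : R' → R' → M)
    (hlam0 : ∀ a : R, lam a 0 0 = 0)
    (hlam1 : ∀ a b : R, lam 1 a b = 0)
    (hlam2 : ∀ x y z t : R, x • lam y z t + lam x (y * z) (y * t) = lam (x * y) z t)
    (hlam3 : ∀ a x y b : R, op b • lam a x y = lam a (x * b) (y * b))
    (hlamadd : ∀ a b x y : R,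
      lam (a + b) x y = lam a x y + lam b x y - eta (b * x) (a * y))
    (heta : ∀ x y : R, eta x y = - eta y x)
    (r : R) (u : R' → M) (hr : IsDualObj p lam mu nu r u) :
    -- `(−r, u_{−r})` is an object of `B*`
    IsDualObj p lam mu nu (-r) (fun x => lam (p x) r (-r) - u x)
    -- and `(r,u_r) + (−r,u_{−r})` is the unit object `(0, u_0)`
    ∧ r + -r = 0
    ∧ (∀ x : R',
        u x + (lam (p x) r (-r) - u x) - lam (p x) r (-r) = lam (p x) 0 0) := by
  have hcomm : ∀ x : R', Commute r (p x) := hr.1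
  have hlam_zero := lam_zero_left (hlam0 0) hlam2
  refine ⟨hr.neg_of_correction (w := fun x => lam (p x) r (-r)) ?_ ?_ ?_, add_neg_cancel r, ?_⟩
  · rw [map_one, hlam1]
  · intro x y
    rw [map_add]
    exact lam_neg_coboundary_add hlamadd heta hlam_zero (hcomm x) (hcomm y)
  · intro x y
    rw [map_mul]
    exact lam_neg_coboundary_mul hlam2 hlam3 (p x) (hcomm y)
  · intro x
    rw [hlam0]
    abel

end
end

section
/- In the Ann-category I(R,M) of type (R,M), the pentagon-type axiom for the left distributivity constraint (the first diagram of (Ann-2)) is equivalent to the identity: for all x,y,z,t ∈ R, x·λ(y,z,t) + λ(x, yz, yt) = λ(xy, z, t). -/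
open CategoryTheory MulOpposite

/-- Objects of the Ann-category `I(R,M)` of type `(R,M)`: the elements of the
ring `R`. -/
structure IObj (R : Type*) (M : Type*) where
  r : R

variable {R M : Type*} [Ring R] [AddCommGroup M]
  [Module R M] [Module Rᵐᵒᵖ M] [SMulCommClass R Rᵐᵒᵖ M]

/-- `I(R,M)` as a category: morphisms `x → y` exist only when `x = y` and are
then given by an element `a ∈ M` (the automorphism `(x,a)`); composition is
addition in `M`. -/
instance : Category (IObj R M) where
  Hom x y := { _a : M // x.r = y.r }
  id _ := ⟨0, rfl⟩
  comp f g := ⟨f.1 + g.1, f.2.trans g.2⟩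
  id_comp f := by apply Subtype.ext; simp
  comp_id f := by apply Subtype.ext; simp
  assoc f g h := by apply Subtype.ext; simp [add_assoc]

/-- The operation `⊗` on objects: `x ⊗ y = xy`. -/
def Imul (x y : IObj R M) : IObj R M := ⟨x.r * y.r⟩

/-- The operation `⊕` on objects: `x ⊕ y = x + y`. -/
def Iadd (x y : IObj R M) : IObj R M := ⟨x.r + y.r⟩

/-- `⊗` on morphisms: `(x,a) ⊗ (y,b) = (xy, x•b + a•y)`. -/
def ImulMap {x x' y y' : IObj R M} (f : x ⟶ x') (g : y ⟶ y') :
    Imul x y ⟶ Imul x' y' :=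
  ⟨x.r • g.1 + op y.r • f.1, by show x.r * y.r = x'.r * y'.r; rw [f.2, g.2]⟩

/-- `⊕` on morphisms: `(x,a) ⊕ (y,b) = (x+y, a+b)`. -/
def IaddMap {x x' y y' : IObj R M} (f : x ⟶ x') (g : y ⟶ y') :
    Iadd x y ⟶ Iadd x' y' :=
  ⟨f.1 + g.1, by show x.r + y.r = x'.r + y'.r; rw [f.2, g.2]⟩

/-- The left distributivity constraint `𝔏_{x,y,z} = (·, λ(x,y,z))`. -/
def IldistHom (lam : R → R → R → M) (x y z : IObj R M) :
    Imul x (Iadd y z) ⟶ Iadd (Imul x y) (Imul x z) :=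
  ⟨lam x.r y.r z.r, by show x.r * (y.r + z.r) = x.r * y.r + x.r * z.r; rw [mul_add]⟩

lemma eqToHom_val {x y : IObj R M} (h : x = y) : (eqToHom h).1 = 0 := by
  subst h; rfl

/-- In the Ann-category `I(R,M)` of type `(R,M)` (all
constraints strict except `c⁺ = (·,η)` and `𝔏 = (·,λ)`), the pentagon-type
axiom for the left distributivity constraint — the first diagram of (Ann-2),
stating `𝔏^{xy}_{z,t} = (a ⊕ a) ∘ 𝔏^x ∘ (id_x ⊗ 𝔏^y) ∘ a⁻¹` with `a = id` —
holds iff for all `x, y, z, t ∈ R`: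
`x·λ(y,z,t) + λ(x, yz, yt) = λ(xy, z, t)`. -/
theorem ann2_pentagon_iff (lam : R → R → R → M) :
    (∀ x y z t : IObj R M,
        IldistHom lam (Imul x y) z t
          = eqToHom (by simp [Imul, Iadd, mul_assoc])
            ≫ ImulMap (𝟙 x) (IldistHom lam y z t)
            ≫ IldistHom lam x (Imul y z) (Imul y t)
            ≫ IaddMap (eqToHom (by simp [Imul, mul_assoc]))
                (eqToHom (by simp [Imul, mul_assoc])))
    ↔ (∀ x y z t : R, x • lam y z t + lam x (y * z) (y * t) = lam (x * y) z t) := by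
  constructor
  · intro h x y z t
    have := congrArg Subtype.val (h ⟨x⟩ ⟨y⟩ ⟨z⟩ ⟨t⟩)
    simp only [ImulMap, IaddMap, IldistHom, CategoryStruct.comp, CategoryStruct.id,
      eqToHom_val, smul_zero, zero_add, add_zero, Imul, Iadd] at this
    erw [eqToHom_val, eqToHom_val, eqToHom_val] at this
    simpa using this.symm
  · intro h x y z t
    apply Subtype.ext
    simp only [ImulMap, IaddMap, IldistHom, CategoryStruct.comp, CategoryStruct.id,
      eqToHom_val, smul_zero, zero_add, add_zero, Imul, Iadd]
    erw [eqToHom_val, eqToHom_val, eqToHom_val]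
    simpa using (h x.r y.r z.r t.r).symm
end
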